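/- Let μ ∈ 𝒫_ac(ℝ^d), let X_1,…,X_m, Y_1,…,Y_n be i.i.d. with law μ (the two-sample null hypothesis), and fix m+n distinct points h_1,…,h_{m+n} ∈ [0,1]^d. Let σ̂ be a measurable random permutation of {1,…,m+n} that is almost surely an optimal assignment of the pooled sample (X_1,…,X_m,Y_1,…,Y_n) to (h_1,…,h_{m+n}). Then the law of the rank energy statistic RE²_{m,n} equals the law of the same functional computed with the pooled empirical ranks replaced by (h_{π(1)},…,h_{π(m+n)}), where π is a uniformly distributed random permutation of {1,…,m+n}; in particular, the distribution of RE²_{m,n} is the same for every such μ. -/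

import Mathlib

/-!
Let `ν = μ^{⊗(m+n)}` be the law of the pooled sample; `ν` is absolutely continuous since `μ` is.
Two distinct permutations can both be optimal for `x` only if their costs agree, which puts `x`
on an affine hyperplane (a genuine one because `h` is injective), so the optimal assignment is
`ν`-a.s. unique and `P(σ̂ = σ) = ν {x | σ is optimal for x}`. Permuting the coordinates of `x`
by `π` preserves `ν` and turns `σ`-optimal samples into `σπ`-optimal ones, so this probability
does not depend on `σ`: `σ̂` is uniform on the `(m+n)!` permutations, and `RE²` is a function
of `σ̂`.
-/

open MeasureTheory ProbabilityTheory Filter Topology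
open scoped ENNReal NNReal Classical

noncomputable section

/-- `Euc d` is the Euclidean space `ℝ^d` with its Euclidean norm. -/
abbrev Euc (d : ℕ) : Type := EuclideanSpace ℝ (Fin d)

/-- The unit cube `[0,1]^d`. -/
def unitCube (d : ℕ) : Set (Euc d) := {x | ∀ i, x i ∈ Set.Icc (0 : ℝ) 1}

/-- A permutation `σ` is an optimal assignment of the points `x` to the points `h` if it
minimizes `σ ↦ ∑ i ‖x i − h (σ i)‖²` over all permutations. -/
def IsOptAssign {d n : ℕ} (x h : Fin n → Euc d) (σ : Equiv.Perm (Fin n)) : Prop :=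
  ∀ τ : Equiv.Perm (Fin n), ∑ i, ‖x i - h (σ i)‖ ^ 2 ≤ ∑ i, ‖x i - h (τ i)‖ ^ 2

/-- The rank energy statistic `RE²_{m,n}`, as a function of the pooled empirical ranks
`r : Fin (m+n) → ℝ^d`, where the first `m` indices correspond to the `X`-sample and the last
`n` indices to the `Y`-sample. -/
def reStat {d : ℕ} (m n : ℕ) (r : Fin (m + n) → Euc d) : ℝ :=
  2 / ((m : ℝ) * n) *
      ∑ i : Fin m, ∑ j : Fin n, ‖r (Fin.castAdd n i) - r (Fin.natAdd m j)‖
    - 1 / (m : ℝ) ^ 2 *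
      ∑ i : Fin m, ∑ j : Fin m, ‖r (Fin.castAdd n i) - r (Fin.castAdd n j)‖
    - 1 / (n : ℝ) ^ 2 *
      ∑ i : Fin n, ∑ j : Fin n, ‖r (Fin.natAdd m i) - r (Fin.natAdd m j)‖

open scoped RealInnerProductSpace

theorem MeasureTheory.Measure.pi_absolutelyContinuous_pi {α : Type*} [MeasurableSpace α] :
    ∀ {N : ℕ} {μ ν : Fin N → Measure α} [∀ i, SigmaFinite (μ i)] [∀ i, SigmaFinite (ν i)],
      (∀ i, μ i ≪ ν i) → Measure.pi μ ≪ Measure.pi ν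
  | 0, _, _, _, _, _ => by rw [Measure.pi_of_empty, Measure.pi_of_empty]
  | N + 1, μ, ν, _, _, h => by
    rw [← (measurePreserving_piFinSuccAbove μ 0).symm.map_eq,
      ← (measurePreserving_piFinSuccAbove ν 0).symm.map_eq]
    exact ((h 0).prod (pi_absolutelyContinuous_pi fun i => h _)).map (MeasurableEquiv.measurable _)

theorem MeasureTheory.Measure.addHaar_setOf_eq_eq_zero {E : Type*} [NormedAddCommGroup E]
    [NormedSpace ℝ E] [MeasurableSpace E] [BorelSpace E] [FiniteDimensional ℝ E]
    (μ : Measure E) [μ.IsAddHaarMeasure] {L : E →ₗ[ℝ] ℝ} (hL : L ≠ 0) (c : ℝ) :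
    μ {x | L x = c} = 0 := by
  obtain ⟨y, hy⟩ : ∃ y, L y ≠ 0 := by
    by_contra! hzero
    exact hL (LinearMap.ext hzero)
  have hlevel : {x | L x = c}
      = (AffineSubspace.mk' ((c / L y) • y) (LinearMap.ker L) : Set E) := by
    ext x
    simp [AffineSubspace.mem_mk', sub_eq_zero, div_mul_cancel₀ _ hy]
  rw [hlevel]
  refine Measure.addHaar_affineSubspace μ _ fun htop => hL ?_
  have hdir := congrArg AffineSubspace.direction htop
  rwa [AffineSubspace.direction_mk', AffineSubspace.direction_top, LinearMap.ker_eq_top] at hdir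

theorem MeasureTheory.measurePreserving_comp_perm {ι α : Type*} [Fintype ι]
    [MeasurableSpace α] (μ : Measure α) [SigmaFinite μ] (π : Equiv.Perm ι) :
    MeasurePreserving (fun x : ι → α => x ∘ π) (Measure.pi fun _ => μ) (Measure.pi fun _ => μ) := by
  convert measurePreserving_piCongrLeft (fun _ : ι => μ) π.symm using 1
  ext x i
  simp [MeasurableEquiv.coe_piCongrLeft, Equiv.piCongrLeft_apply]

theorem MeasureTheory.measure_preimage_singleton_eq_of_ae_unique {Ω α β : Type*} [MeasurableSpace Ω]
    [MeasurableSpace α] {P : Measure Ω} {ν : Measure α} {X : Ω → α} (hX : Measurable X)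
    (hmap : P.map X = ν) {R : α → β → Prop} (hR : ∀ b, MeasurableSet {x | R x b})
    (huniq : ∀ᵐ x ∂ν, ∀ b b', R x b → R x b' → b = b') {S : Ω → β}
    (hS : ∀ᵐ ω ∂P, R (X ω) (S ω)) (b : β) :
    P (S ⁻¹' {b}) = ν {x | R x b} := by
  have huniq' : ∀ᵐ ω ∂P, ∀ b b', R (X ω) b → R (X ω) b' → b = b' :=
    ae_of_ae_map hX.aemeasurable (hmap ▸ huniq)
  calc P (S ⁻¹' {b}) = P (X ⁻¹' {x | R x b}) := by
        refine measure_congr ?_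
        filter_upwards [hS, huniq'] with ω hSω hunique
        refine propext ⟨fun hb => ?_, fun hRb => hunique _ _ hSω hRb⟩
        rwa [← show S ω = b from hb]
    _ = ν {x | R x b} := by rw [← hmap, Measure.map_apply hX (hR b)]

theorem MeasureTheory.measure_preimage_eq_card_div_of_measure_fiber_eq {Ω α : Type*}
    [MeasurableSpace Ω] {P : Measure Ω} [IsProbabilityMeasure P] [Fintype α] {X : Ω → α}
    (hX : ∀ a, MeasurableSet (X ⁻¹' {a})) (hconst : ∀ a b, P (X ⁻¹' {a}) = P (X ⁻¹' {b}))
    (s : Finset α) : P (X ⁻¹' s) = s.card / Fintype.card α := by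
  obtain ⟨ω⟩ := nonempty_of_isProbabilityMeasure P
  have hsum : ∀ t : Finset α, P (X ⁻¹' t) = t.card * P (X ⁻¹' {X ω}) := fun t => by
    rw [← sum_measure_preimage_singleton t fun a _ => hX a,
      Finset.sum_congr rfl fun a _ => hconst a (X ω), Finset.sum_const, nsmul_eq_mul]
  have hfiber : P (X ⁻¹' {X ω}) = (Fintype.card α : ℝ≥0∞)⁻¹ := by
    refine ENNReal.eq_inv_of_mul_eq_one_left ?_
    rw [mul_comm, ← Finset.card_univ, ← hsum, Finset.coe_univ, Set.preimage_univ, measure_univ]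
  rw [hsum, hfiber, div_eq_mul_inv]

section Assignment

variable {d N : ℕ}

def assignCost (x h : Fin N → Euc d) (σ : Equiv.Perm (Fin N)) : ℝ :=
  ∑ i, ‖x i - h (σ i)‖ ^ 2

theorem isOptAssign_iff (x h : Fin N → Euc d) (σ : Equiv.Perm (Fin N)) :
    IsOptAssign x h σ ↔ ∀ τ, assignCost x h σ ≤ assignCost x h τ :=
  Iff.rfl

theorem measurableSet_isOptAssign (h : Fin N → Euc d) (σ : Equiv.Perm (Fin N)) :
    MeasurableSet {x | IsOptAssign x h σ} := by
  have hcost : ∀ τ, Measurable fun x => assignCost x h τ := fun τ => by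
    unfold assignCost; fun_prop
  simp only [isOptAssign_iff, Set.ofPred_forall]
  exact MeasurableSet.iInter fun τ => measurableSet_le (hcost σ) (hcost τ)

theorem assignCost_sub_assignCost (x h : Fin N → Euc d) (σ τ : Equiv.Perm (Fin N)) :
    assignCost x h σ - assignCost x h τ
      = ∑ i, (‖h (σ i)‖ ^ 2 - ‖h (τ i)‖ ^ 2) - 2 * ∑ i, ⟪h (σ i) - h (τ i), x i⟫ := by
  simp only [assignCost, ← Finset.sum_sub_distrib, Finset.mul_sum, norm_sub_sq_real,
    real_inner_comm (x _), inner_sub_right]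
  exact Finset.sum_congr rfl fun i _ => by ring

theorem assignCost_comp_perm (x h : Fin N → Euc d) (π τ : Equiv.Perm (Fin N)) :
    assignCost (x ∘ π) h τ = assignCost x h (τ * π⁻¹) :=
  Fintype.sum_equiv π _ _ fun i => by simp

theorem isOptAssign_comp_mul_iff (x h : Fin N → Euc d) (σ π : Equiv.Perm (Fin N)) :
    IsOptAssign (x ∘ π) h (σ * π) ↔ IsOptAssign x h σ := by
  simp only [isOptAssign_iff, assignCost_comp_perm, mul_inv_cancel_right]
  exact (Equiv.mulRight π⁻¹).forall_congr_right
    (q := fun τ => assignCost x h σ ≤ assignCost x h τ)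

theorem sum_inner_eq_of_isOptAssign {x h : Fin N → Euc d} {σ τ : Equiv.Perm (Fin N)}
    (hσ : IsOptAssign x h σ) (hτ : IsOptAssign x h τ) :
    ∑ i, ⟪h (σ i) - h (τ i), x i⟫ = (∑ i, (‖h (σ i)‖ ^ 2 - ‖h (τ i)‖ ^ 2)) / 2 := by
  have hcost := assignCost_sub_assignCost x h σ τ
  have heq : assignCost x h σ = assignCost x h τ := le_antisymm (hσ τ) (hτ σ)
  rw [heq, sub_self] at hcost
  linarith

theorem ae_isOptAssign_unique {ν : Measure (Fin N → Euc d)} (hν : ν ≪ volume)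
    {h : Fin N → Euc d} (hinj : Function.Injective h) :
    ∀ᵐ x ∂ν, ∀ σ τ, IsOptAssign x h σ → IsOptAssign x h τ → σ = τ := by
  rw [ae_all_iff]
  intro σ
  rw [ae_all_iff]
  intro τ
  by_cases hστ : σ = τ
  · exact ae_of_all _ fun _ _ _ => hστ
  obtain ⟨i₀, hi₀⟩ : ∃ i, σ i ≠ τ i := not_forall.1 fun heq => hστ (Equiv.ext heq)
  set L : (Fin N → Euc d) →ₗ[ℝ] ℝ :=
    ∑ i, (innerₛₗ ℝ (h (σ i) - h (τ i))).comp (LinearMap.proj i) with hLdef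
  have hL : ∀ x, L x = ∑ i, ⟪h (σ i) - h (τ i), x i⟫ := fun x => by
    simp [hLdef, LinearMap.sum_apply, inner_sub_left, Finset.sum_sub_distrib]
  have hL0 : L ≠ 0 := fun hzero => by
    have hsingle := congrArg (· (Pi.single i₀ (h (σ i₀) - h (τ i₀)))) hzero
    simp only [hL, LinearMap.zero_apply] at hsingle
    rw [Finset.sum_eq_single i₀ (fun j _ hj => by simp [Pi.single_eq_of_ne hj]) (by simp),
      Pi.single_eq_same, inner_self_eq_zero, sub_eq_zero] at hsingle
    exact hi₀ (hinj hsingle)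
  refine ae_iff.2 (hν (measure_mono_null (fun x hx => ?_)
    (Measure.addHaar_setOf_eq_eq_zero volume hL0 ((∑ i, (‖h (σ i)‖ ^ 2 - ‖h (τ i)‖ ^ 2)) / 2))))
  simp only [Set.mem_ofPred_eq, Classical.not_imp] at hx
  rw [Set.mem_ofPred_eq, hL]
  exact sum_inner_eq_of_isOptAssign hx.1 hx.2.1

theorem pi_setOf_isOptAssign_eq (μ : Measure (Euc d)) [SigmaFinite μ] (h : Fin N → Euc d)
    (σ τ : Equiv.Perm (Fin N)) :
    Measure.pi (fun _ => μ) {x | IsOptAssign x h σ}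
      = Measure.pi (fun _ => μ) {x | IsOptAssign x h τ} := by
  have hpre : (fun x => x ∘ (σ⁻¹ * τ)) ⁻¹' {x | IsOptAssign x h (σ * (σ⁻¹ * τ))}
      = {x | IsOptAssign x h σ} :=
    Set.ext fun x => isOptAssign_comp_mul_iff x h σ _
  rw [← hpre, (measurePreserving_comp_perm μ _).measure_preimage
    (measurableSet_isOptAssign h _).nullMeasurableSet, mul_inv_cancel_left]

end Assignment

theorem stmt13_general
    {d m n : ℕ} {Ω : Type*} [MeasurableSpace Ω] (P : Measure Ω) [IsProbabilityMeasure P]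
    (μ : Measure (Euc d)) [IsProbabilityMeasure μ] (hac : μ ≪ volume)
    (Z : Fin (m + n) → Ω → Euc d) (hZmeas : ∀ i, Measurable (Z i))
    (hindep : iIndepFun Z P)
    (hlaw : ∀ i, Measure.map (Z i) P = μ)
    (h : Fin (m + n) → Euc d)
    (hinj : Function.Injective h)
    (σhat : Ω → Equiv.Perm (Fin (m + n)))
    (hσmeas : ∀ σ₀ : Equiv.Perm (Fin (m + n)), MeasurableSet {ω | σhat ω = σ₀})
    (hopt : ∀ᵐ ω ∂P, IsOptAssign (fun i => Z i ω) h (σhat ω)) :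
    ∀ B : Set ℝ, MeasurableSet B →
      P {ω | reStat m n (fun k => h (σhat ω k)) ∈ B}
        = ((Finset.univ.filter
              (fun π : Equiv.Perm (Fin (m + n)) =>
                reStat m n (fun k => h (π k)) ∈ B)).card : ℝ≥0∞)
          / (Nat.factorial (m + n) : ℝ≥0∞) := by
  intro B _
  have hjoint : P.map (fun ω i => Z i ω) = Measure.pi fun _ => μ := by
    rw [hindep.map_fun_eq_pi_map fun i => (hZmeas i).aemeasurable]
    simp only [hlaw]
  have hfiber (σ₀ : Equiv.Perm (Fin (m + n))) :
      P (σhat ⁻¹' {σ₀}) = Measure.pi (fun _ => μ) {x | IsOptAssign x h σ₀} :=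
    measure_preimage_singleton_eq_of_ae_unique (measurable_pi_lambda _ hZmeas) hjoint
      (measurableSet_isOptAssign h)
      (ae_isOptAssign_unique (Measure.pi_absolutelyContinuous_pi fun _ => hac) hinj)
      hopt σ₀
  have huniform := measure_preimage_eq_card_div_of_measure_fiber_eq hσmeas
    (fun σ τ => by rw [hfiber, hfiber, pi_setOf_isOptAssign_eq])
    (Finset.univ.filter fun π : Equiv.Perm (Fin (m + n)) => reStat m n (fun k => h (π k)) ∈ B)
  rw [Fintype.card_perm, Fintype.card_fin] at huniform
  convert huniform using 2
  ext ω
  simp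

/-- Distribution-freeness of the rank energy statistic under the two-sample null: if the
pooled sample is i.i.d. from an absolutely continuous law, then the law of `RE²_{m,n}`
coincides with the law of the same functional with the pooled empirical ranks replaced by a
uniformly random ordering of the grid; in particular it is the same for every such `μ`. -/
theorem stmt13
    {d m n : ℕ} {Ω : Type*} [MeasurableSpace Ω] (P : Measure Ω) [IsProbabilityMeasure P]
    (μ : Measure (Euc d)) [IsProbabilityMeasure μ] (hac : μ ≪ volume)
    (Z : Fin (m + n) → Ω → Euc d) (hZmeas : ∀ i, Measurable (Z i))
    (hindep : iIndepFun Z P)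
    (hlaw : ∀ i, Measure.map (Z i) P = μ)
    (h : Fin (m + n) → Euc d) (hcube : ∀ i, h i ∈ unitCube d)
    (hinj : Function.Injective h)
    (σhat : Ω → Equiv.Perm (Fin (m + n)))
    (hσmeas : ∀ σ₀ : Equiv.Perm (Fin (m + n)), MeasurableSet {ω | σhat ω = σ₀})
    (hopt : ∀ᵐ ω ∂P, IsOptAssign (fun i => Z i ω) h (σhat ω)) :
    ∀ B : Set ℝ, MeasurableSet B →
      P {ω | reStat m n (fun k => h (σhat ω k)) ∈ B}
        = ((Finset.univ.filter
              (fun π : Equiv.Perm (Fin (m + n)) =>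
                reStat m n (fun k => h (π k)) ∈ B)).card : ℝ≥0∞)
          / (Nat.factorial (m + n) : ℝ≥0∞) :=
  stmt13_general P μ hac Z hZmeas hindep hlaw h hinj σhat hσmeas hopt
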